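/- arXiv:0705.4256 — 3 statements merged into one kernel-verified Lean document; each statement's English description precedes it below -/
import Mathlib

section
/- Let q be a prime power, F_q the finite field with q elements, and ε > 0 a real number. Let d be the smallest positive integer with d ≥ 1/(2ε). If A ⊆ F_q satisfies |A| > q^(1/2 + ε), then every nonzero element of F_q lies in dA². -/
/-!
Put `E = A^d ⊆ F^d`. Since `|A|^(2d) > q^((1 + 2ε)d) ≥ q^(d+1)`, it suffices that `x ⬝ᵥ y = t`
has a solution in `E × E` whenever `t ≠ 0` and `|E|² > q^(d+1)`. Expand the discrepancy
`D(y) = q · #{x ∈ E | x ⬝ᵥ y = t} - |E|` in a nontrivial additive character and sum `D(y)²` over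
all `y ∈ F^d`: orthogonality leaves only the pairs `s • x = s' • x'` with `s, s' ≠ 0`, and writing
`s = s' * l` and using `t ≠ 0` gives `∑_y D(y)² = q^d ∑_{x ∈ E} (q - #{l ≠ 0 | l • x ∈ E})`, which
is at most `q^(d+1) |E|`. Without a solution `D = -|E|` on `E`, so `|E|³ ≤ q^(d+1) |E|`.
-/

open Finset

theorem AddChar.map_sum_eq_prod {ι A M : Type*} [AddCommMonoid A] [CommMonoid M]
    (ψ : AddChar A M) (s : Finset ι) (f : ι → A) : ψ (∑ i ∈ s, f i) = ∏ i ∈ s, ψ (f i) := by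
  induction s using Finset.cons_induction with
  | empty => simp
  | cons a s ha ih => rw [sum_cons, prod_cons, map_add_eq_mul, ih]

theorem Fintype.sum_eq_add_sum_units {K M : Type*} [Field K] [Fintype K] [DecidableEq K]
    [AddCommMonoid M] (f : K → M) : ∑ a, f a = f 0 + ∑ u : Kˣ, f u := by
  rw [← Fintype.sum_equiv unitsEquivNeZero.symm (fun a => f a) _ (fun _ => rfl),
    ← Finset.sum_subtype (univ.erase 0) (by simp), add_sum_erase _ _ (mem_univ 0)]

section

variable {F : Type*} [Field F] [Fintype F] [DecidableEq F] {ψ : AddChar F ℂ}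

theorem sum_units_addChar_mul (hψ : ψ.IsPrimitive) (b : F) :
    ∑ s : Fˣ, ψ (s * b) = if b = 0 then (Fintype.card F : ℂ) - 1 else -1 := by
  have h := AddChar.sum_mulShift b hψ
  rw [Fintype.sum_eq_add_sum_units, zero_mul, AddChar.map_zero_eq_one] at h
  split_ifs at h ⊢ <;> linear_combination h

variable {ι : Type*} [Fintype ι]

noncomputable def dotDiscrepancy (E : Finset (ι → F)) (t : F) (y : ι → F) : ℝ :=
  Fintype.card F * #{x ∈ E | x ⬝ᵥ y = t} - #E

theorem dotDiscrepancy_eq_sum_addChar (hψ : ψ.IsPrimitive) (E : Finset (ι → F)) (t : F)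
    (y : ι → F) :
    (dotDiscrepancy E t y : ℂ) = ∑ x ∈ E, ∑ s : Fˣ, ψ (s * (x ⬝ᵥ y - t)) := by
  have hterm : ∀ x : ι → F, (if x ⬝ᵥ y - t = 0 then (Fintype.card F : ℂ) - 1 else -1) =
      Fintype.card F * (if x ⬝ᵥ y = t then 1 else 0) - 1 := by
    intro x
    simp only [sub_eq_zero]
    split_ifs <;> ring
  simp_rw [sum_units_addChar_mul hψ, hterm, sum_sub_distrib, ← mul_sum, sum_boole,
    sum_const, nsmul_eq_mul, mul_one]
  simp [dotDiscrepancy]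

theorem sum_ite_smul_eq_smul_addChar (hψ : ψ.IsPrimitive) {E : Finset (ι → F)} {x : ι → F}
    (hx : x ∈ E) {t : F} (ht : t ≠ 0) :
    ∑ s' : Fˣ, ∑ s : Fˣ, ∑ x' ∈ E, (if s • x = s' • x' then ψ ((s' - s) * t) else 0) =
      (Fintype.card F : ℂ) - #{l : Fˣ | l • x ∈ E} := by
  have hsolve (s s' : Fˣ) (x' : ι → F) : s • x = s' • x' ↔ (s'⁻¹ * s) • x = x' := by
    rw [mul_smul, inv_smul_eq_iff, eq_comm]
  have hline (l : Fˣ) : ∑ s' : Fˣ, ψ (s' * ((1 - l) * t)) =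
      if l = 1 then (Fintype.card F : ℂ) - 1 else -1 := by
    rw [sum_units_addChar_mul hψ]
    by_cases hl : l = 1
    · simp [hl]
    · simp [hl, ht, sub_eq_zero, eq_comm (a := (1 : F))]
  have hterm (l : Fˣ) :
      (if l • x ∈ E then (if l = 1 then (Fintype.card F : ℂ) - 1 else -1) else 0) =
        (if l = 1 then (Fintype.card F : ℂ) else 0) - if l • x ∈ E then 1 else 0 := by
    split_ifs <;> simp_all
  calc _ = ∑ s' : Fˣ, ∑ l : Fˣ, if l • x ∈ E then ψ (s' * ((1 - l) * t)) else 0 := by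
        refine sum_congr rfl fun s' _ => ?_
        rw [← Equiv.sum_comp (Equiv.mulLeft s')]
        simp_rw [hsolve, sum_ite_eq, Equiv.coe_mulLeft, inv_mul_cancel_left, Units.val_mul]
        refine sum_congr rfl fun l _ => ?_
        congr 2; ring
    _ = _ := by
        rw [sum_comm]
        simp_rw [← ite_sum_zero, hline, hterm, sum_sub_distrib, sum_ite_eq', mem_univ, if_true,
          sum_boole]

variable [DecidableEq ι]

theorem sum_addChar_dotProduct (hψ : ψ.IsPrimitive) (z : ι → F) :
    ∑ y, ψ (z ⬝ᵥ y) = if z = 0 then (Fintype.card F : ℂ) ^ Fintype.card ι else 0 := by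
  calc ∑ y, ψ (z ⬝ᵥ y) = ∏ i, ∑ v, ψ (v * z i) := by
        simp_rw [Fintype.prod_sum, dotProduct, ψ.map_sum_eq_prod, mul_comm]
    _ = _ := by
        simp_rw [AddChar.sum_mulShift _ hψ, Nat.cast_ite, Nat.cast_zero, Fintype.prod_ite_zero,
          prod_const, card_univ, ← funext_iff, Pi.zero_def]

theorem sum_sq_dotDiscrepancy_eq_sum_addChar (hψ : ψ.IsPrimitive) (E : Finset (ι → F))
    (t : F) :
    ∑ y, (dotDiscrepancy E t y : ℂ) ^ 2 = (Fintype.card F : ℂ) ^ Fintype.card ι *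
      ∑ x ∈ E, ∑ s' : Fˣ, ∑ s : Fˣ, ∑ x' ∈ E,
        if s • x = s' • x' then ψ ((s' - s) * t) else 0 := by
  have hconj (y : ι → F) : (dotDiscrepancy E t y : ℂ) =
      ∑ s' : Fˣ, ∑ x' ∈ E, ψ (-(s' * (x' ⬝ᵥ y - t))) := by
    rw [← Complex.conj_ofReal, dotDiscrepancy_eq_sum_addChar hψ, sum_comm]
    simp only [map_sum, AddChar.map_neg_eq_conj]
  have hsum_y (x x' : ι → F) (s s' : Fˣ) :
      ∑ y, ψ (s * (x ⬝ᵥ y - t)) * ψ (-(s' * (x' ⬝ᵥ y - t))) =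
        (Fintype.card F : ℂ) ^ Fintype.card ι *
          if s • x = s' • x' then ψ ((s' - s) * t) else 0 := by
    have harg (y : ι → F) : s * (x ⬝ᵥ y - t) + -(s' * (x' ⬝ᵥ y - t)) =
        (s • x - s' • x') ⬝ᵥ y + (s' - s) * t := by
      simp only [Units.smul_def, sub_dotProduct, smul_dotProduct, smul_eq_mul]
      ring
    simp_rw [← AddChar.map_add_eq_mul, harg, AddChar.map_add_eq_mul, ← sum_mul,
      sum_addChar_dotProduct hψ, sub_eq_zero]
    split_ifs <;> ring
  calc ∑ y, (dotDiscrepancy E t y : ℂ) ^ 2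
      = ∑ y, ∑ x ∈ E, ∑ s' : Fˣ, ∑ s : Fˣ, ∑ x' ∈ E,
          ψ (s * (x ⬝ᵥ y - t)) * ψ (-(s' * (x' ⬝ᵥ y - t))) := by
        refine sum_congr rfl fun y _ => ?_
        rw [sq]
        nth_rw 1 [dotDiscrepancy_eq_sum_addChar hψ]
        simp_rw [hconj, sum_mul_sum]
    _ = _ := by
        simp_rw [sum_comm (s := (univ : Finset (ι → F))), hsum_y, ← mul_sum]

theorem sum_sq_dotDiscrepancy (E : Finset (ι → F)) {t : F} (ht : t ≠ 0) :
    ∑ y, dotDiscrepancy E t y ^ 2 = (Fintype.card F : ℝ) ^ Fintype.card ι *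
      ∑ x ∈ E, ((Fintype.card F : ℝ) - #{l : Fˣ | l • x ∈ E}) := by
  have hψ := AddChar.FiniteField.primitiveChar_to_Complex_isPrimitive F
  apply Complex.ofReal_injective
  push_cast
  rw [sum_sq_dotDiscrepancy_eq_sum_addChar hψ]
  congr 1
  exact sum_congr rfl fun x hx => sum_ite_smul_eq_smul_addChar hψ hx ht

theorem sum_sq_dotDiscrepancy_le (E : Finset (ι → F)) {t : F} (ht : t ≠ 0) :
    ∑ y, dotDiscrepancy E t y ^ 2 ≤ (Fintype.card F : ℝ) ^ (Fintype.card ι + 1) * #E := by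
  rw [sum_sq_dotDiscrepancy E ht, pow_succ, mul_assoc]
  gcongr
  calc ∑ x ∈ E, ((Fintype.card F : ℝ) - #{l : Fˣ | l • x ∈ E})
      ≤ ∑ x ∈ E, (Fintype.card F : ℝ) := by gcongr; exact sub_le_self _ (Nat.cast_nonneg _)
    _ = _ := by rw [sum_const, nsmul_eq_mul, mul_comm]

theorem exists_dotProduct_eq_of_card_sq_gt {E : Finset (ι → F)} {t : F} (ht : t ≠ 0)
    (hE : (Fintype.card F : ℝ) ^ (Fintype.card ι + 1) < (#E : ℝ) ^ 2) :
    ∃ x ∈ E, ∃ y ∈ E, x ⬝ᵥ y = t := by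
  by_contra! h
  have hD (y : ι → F) (hy : y ∈ E) : dotDiscrepancy E t y = -#E := by
    rw [dotDiscrepancy, filter_false_of_mem fun x hx => h x hx y hy]
    simp
  have hE_pos : (0 : ℝ) < #E := by
    have hq : (0 : ℝ) ≤ (Fintype.card F : ℝ) ^ (Fintype.card ι + 1) := by positivity
    nlinarith [(Nat.cast_nonneg _ : (0 : ℝ) ≤ #E)]
  have : (#E : ℝ) * #E ^ 2 ≤ (Fintype.card F : ℝ) ^ (Fintype.card ι + 1) * #E :=
    calc (#E : ℝ) * #E ^ 2 = ∑ y ∈ E, dotDiscrepancy E t y ^ 2 := by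
          rw [sum_congr rfl fun y hy => by rw [hD y hy], sum_const, nsmul_eq_mul, neg_sq]
      _ ≤ ∑ y, dotDiscrepancy E t y ^ 2 :=
          sum_le_sum_of_subset_of_nonneg (subset_univ E) fun _ _ _ => sq_nonneg _
      _ ≤ _ := sum_sq_dotDiscrepancy_le E ht
  nlinarith

end

/-- If `|A| > q^(1/2+ε)` and `d` is the smallest positive integer with `d ≥ 1/(2ε)`,
then every nonzero element of `F_q` lies in `dA²`. -/
theorem stmt_4 {F : Type*} [Field F] [Fintype F] (ε : ℝ) (hε : 0 < ε)
    (d : ℕ) (hd : d = max 1 ⌈1 / (2 * ε)⌉₊)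
    (A : Finset F)
    (hA : (A.card : ℝ) > (Fintype.card F : ℝ) ^ ((1 : ℝ) / 2 + ε)) :
    ∀ t : F, t ≠ 0 →
      ∃ a a' : Fin d → F, (∀ i, a i ∈ A) ∧ (∀ i, a' i ∈ A) ∧
        t = ∑ i, a i * a' i := by
  classical
  intro t ht
  have hq : (1 : ℝ) ≤ Fintype.card F := mod_cast Fintype.card_pos
  have hd_pos : 0 < d := by omega
  have hdε : 1 ≤ d * (2 * ε) := by
    have : 1 / (2 * ε) ≤ d := (Nat.le_ceil _).trans (mod_cast hd ▸ le_max_right _ _)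
    rwa [div_le_iff₀ (by positivity)] at this
  have hcard : (Fintype.card F : ℝ) ^ (d + 1) < ((#A : ℝ) ^ d) ^ 2 :=
    calc (Fintype.card F : ℝ) ^ (d + 1)
        ≤ ((Fintype.card F : ℝ) ^ ((1 : ℝ) / 2 + ε)) ^ (2 * d) := by
          rw [← Real.rpow_natCast, ← Real.rpow_natCast, ← Real.rpow_mul (by positivity)]
          exact Real.rpow_le_rpow_of_exponent_le hq (by push_cast; linarith)
      _ < (#A : ℝ) ^ (2 * d) := pow_lt_pow_left₀ hA (by positivity) (by omega)
      _ = ((#A : ℝ) ^ d) ^ 2 := by rw [← pow_mul, mul_comm]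
  obtain ⟨a, ha, a', ha', rfl⟩ := exists_dotProduct_eq_of_card_sq_gt
    (E := Fintype.piFinset fun _ : Fin d => A) ht (by simpa [Fintype.card_piFinset] using hcard)
  exact ⟨a, a', Fintype.mem_piFinset.1 ha, Fintype.mem_piFinset.1 ha', rfl⟩
end

section
/- Let q be a prime power, F_q the finite field with q elements, d a positive integer, and let C_geom > 0 and 0 ≤ α ≤ d be real numbers. Let E ⊆ F_q^d with 0 ∉ E be such that |E ∩ l_y| ≤ C_geom · q^(α/d) for every y ∈ F_q^d with y ≠ 0, where l_y = {t·y : t ∈ F_q}. Then |{x·y : x, y ∈ E}| ≥ q · |E|² / (C_geom · q^(d + α/d) + |E|²). -/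
/-!
Write `Δ` for the set of dot products and `ν t` for the number of pairs `(x, y) ∈ E²` with
`x ⬝ᵥ y = t`. Cauchy–Schwarz over the fibres of `ν` gives `|E|⁴ ≤ |Δ| · ∑ ν(t)²`. Orthogonality
of the characters `t ↦ ψ (s * t)` gives `q · ∑ ν(t)² = ∑ₛ |∑_{x ∈ E} Ê(s • x)|²`, where
`Ê z = ∑_{y ∈ E} ψ (z ⬝ᵥ y)`. The term `s = 0` is `|E|⁴`. For `s ≠ 0`, Cauchy–Schwarz in `x`
and the fact that `(s, x) ↦ s • x` hits each point at most `C q^(α/d)` times (the line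
hypothesis) bound the rest by `|E| · C q^(α/d) · ∑_z |Ê z|² = C q^(d + α/d) |E|²` (Plancherel).
-/

open Finset

namespace AddChar

variable {ι A M : Type*} [AddCommMonoid A] [CommMonoid M]

lemma map_sum_eq_prod_s11 (ψ : AddChar A M) (s : Finset ι) (f : ι → A) :
    ψ (∑ i ∈ s, f i) = ∏ i ∈ s, ψ (f i) := by
  classical
  induction s using Finset.induction_on with
  | empty => simp
  | insert i s hi ih => rw [sum_insert hi, prod_insert hi, map_add_eq_mul, ih]

end AddChar

section Orthogonality

variable {G K α : Type*} [AddCommGroup G] [Finite G] [DecidableEq G] [Fintype K]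

lemma sum_norm_sq_sum_addChar_eq (χ : K → AddChar G ℂ)
    (horth : ∀ x, ∑ k, χ k x = if x = 0 then (Fintype.card K : ℂ) else 0)
    (S : Finset α) (g : α → G) :
    ∑ k, ‖∑ a ∈ S, χ k (g a)‖ ^ 2 = Fintype.card K * #{p ∈ S ×ˢ S | g p.1 = g p.2} := by
  have hexpand : ∀ k, ((‖∑ a ∈ S, χ k (g a)‖ ^ 2 : ℝ) : ℂ) =
      ∑ p ∈ S ×ˢ S, χ k (g p.1 - g p.2) := by
    intro k
    push_cast
    rw [← Complex.mul_conj', map_sum, sum_mul_sum, sum_product]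
    simp [sub_eq_add_neg, AddChar.map_add_eq_mul, AddChar.map_neg_eq_conj]
  apply Complex.ofReal_injective
  rw [Complex.ofReal_sum]
  simp_rw [hexpand]
  rw [sum_comm]
  simp [horth, sub_eq_zero, sum_ite, mul_comm]

end Orthogonality

section Dilation

variable {F V : Type*} [Field F] [Fintype F] [DecidableEq F] [AddCommGroup V] [Module F V]
  [Fintype V] [DecidableEq V]

lemma sum_erase_zero_sum_smul_le {E : Finset V} (h0 : (0 : V) ∉ E) {B : ℝ} (hB : 0 ≤ B)
    (hline : ∀ y ≠ 0, (#{x ∈ E | ∃ t : F, x = t • y} : ℝ) ≤ B) {f : V → ℝ} (hf : 0 ≤ f) :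
    ∑ s ∈ univ.erase (0 : F), ∑ x ∈ E, f (s • x) ≤ B * ∑ z, f z := by
  have hfiber : ∀ z, (#{p ∈ univ.erase (0 : F) ×ˢ E | p.1 • p.2 = z} : ℝ) ≤ B := by
    intro z
    rcases eq_or_ne z 0 with rfl | hz
    · rw [filter_eq_empty_iff.2 fun p hp => smul_ne_zero (mem_erase.1 (mem_product.1 hp).1).1
        (ne_of_mem_of_not_mem (mem_product.1 hp).2 h0)]
      simpa using hB
    refine le_trans (Nat.cast_le.2 (card_le_card_of_injOn Prod.snd ?_ ?_)) (hline z hz)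
    · rintro ⟨s, x⟩ hp
      simp only [coe_filter, mem_product, mem_erase] at hp
      obtain ⟨⟨⟨hs, -⟩, hx⟩, rfl⟩ := hp
      exact mem_filter.2 ⟨hx, s⁻¹, (inv_smul_smul₀ hs x).symm⟩
    · rintro ⟨s, x⟩ hp ⟨s', x'⟩ hp' (rfl : x = x')
      simp only [coe_filter, mem_product, Set.mem_ofPred_eq] at hp hp'
      have hx : x ≠ 0 := ne_of_mem_of_not_mem hp.1.2 h0
      rw [smul_left_injective F hx (hp.2.trans hp'.2.symm : s • x = s' • x)]
  rw [← sum_product', ← sum_fiberwise_of_maps_to (g := fun p : F × V => p.1 • p.2)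
    (t := univ) (fun _ _ => mem_univ _), mul_sum]
  gcongr with z
  rw [sum_congr rfl fun p hp => congrArg f (mem_filter.1 hp).2, sum_const, nsmul_eq_mul]
  exact mul_le_mul_of_nonneg_right (hfiber z) (hf z)

end Dilation

lemma norm_sum_sq_le_card_mul_sum_norm_sq {ι E : Type*} [SeminormedAddCommGroup E]
    (s : Finset ι) (f : ι → E) : ‖∑ i ∈ s, f i‖ ^ 2 ≤ #s * ∑ i ∈ s, ‖f i‖ ^ 2 :=
  (pow_le_pow_left₀ (norm_nonneg _) (norm_sum_le s f) 2).trans sq_sum_le_card_mul_sum_sq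

lemma card_sq_le_card_image_mul_card_filter {α β : Type*} [DecidableEq β] (S : Finset α)
    (g : α → β) : #S ^ 2 ≤ #(S.image g) * #{p ∈ S ×ˢ S | g p.1 = g p.2} := by
  classical
  have hpairs : #{p ∈ S ×ˢ S | g p.1 = g p.2} = ∑ t ∈ S.image g, #{a ∈ S | g a = t} ^ 2 := by
    rw [card_eq_sum_card_fiberwise (f := fun p => g p.1) (t := S.image g)
      fun p hp => mem_image_of_mem g (mem_product.1 (mem_filter.1 hp).1).1]
    refine sum_congr rfl fun t _ => ?_
    rw [sq, ← card_product]
    congr 1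
    ext ⟨a, b⟩
    simp only [mem_filter, mem_product]
    constructor
    · rintro ⟨⟨⟨ha, hb⟩, hab⟩, rfl⟩
      exact ⟨⟨ha, rfl⟩, hb, hab.symm⟩
    · rintro ⟨⟨ha, rfl⟩, hb, hab⟩
      exact ⟨⟨⟨ha, hb⟩, hab.symm⟩, rfl⟩
  rw [card_eq_sum_card_image g S, hpairs]
  exact sq_sum_le_card_mul_sum_sq

section DotProduct

variable {ι R R' : Type*} [Fintype ι] [DecidableEq ι] [CommRing R] [Fintype R] [DecidableEq R]
  [CommRing R'] [IsDomain R']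

lemma AddChar.sum_apply_dotProduct {ψ : AddChar R R'} (hψ : ψ.IsPrimitive) (x : ι → R) :
    ∑ z : ι → R, ψ (z ⬝ᵥ x) = if x = 0 then (Fintype.card (ι → R) : R') else 0 := by
  simp_rw [dotProduct, AddChar.map_sum_eq_prod_s11]
  rw [← Fintype.prod_sum (fun i t => ψ (t * x i))]
  simp_rw [AddChar.sum_mulShift _ hψ, Nat.cast_ite, Nat.cast_zero]
  rw [Fintype.prod_ite_zero]
  simp [funext_iff]

def AddChar.dotProductChar (ψ : AddChar R R') (z : ι → R) : AddChar (ι → R) R' :=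
  ψ.compAddMonoidHom (.mk' (z ⬝ᵥ ·) (dotProduct_add z))

end DotProduct

section Energy

variable {ι F : Type*} [Fintype ι] [DecidableEq ι] [Field F] [Fintype F] [DecidableEq F]

theorem card_mul_card_eq_dotProduct_le {E : Finset (ι → F)} (h0 : (0 : ι → F) ∉ E) {B : ℝ}
    (hB : 0 ≤ B) (hline : ∀ y ≠ 0, (#{x ∈ E | ∃ t : F, x = t • y} : ℝ) ≤ B) :
    (Fintype.card F : ℝ) * #{p ∈ (E ×ˢ E) ×ˢ (E ×ˢ E) | p.1.1 ⬝ᵥ p.1.2 = p.2.1 ⬝ᵥ p.2.2} ≤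
      #E ^ 4 + B * Fintype.card (ι → F) * #E ^ 2 := by
  obtain ⟨ψ, hψ⟩ : ∃ ψ : AddChar F ℂ, ψ.IsPrimitive :=
    ⟨_, AddChar.FiniteField.primitiveChar_to_Complex_isPrimitive F⟩
  set S : (ι → F) → ℂ := fun z => ∑ y ∈ E, ψ (z ⬝ᵥ y)
  set M : F → ℂ := fun s => ∑ p ∈ E ×ˢ E, ψ (s * p.1 ⬝ᵥ p.2)
  have hParseval : ∑ z, ‖S z‖ ^ 2 = Fintype.card (ι → F) * #E := by
    have := sum_norm_sq_sum_addChar_eq (ψ.dotProductChar) (AddChar.sum_apply_dotProduct hψ) E id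
    simp only [id] at this
    rwa [← diag_eq_filter, diag_card] at this
  have hEnergy := sum_norm_sq_sum_addChar_eq ψ.mulShift
    (fun x => by simpa using AddChar.sum_mulShift x hψ) (E ×ˢ E) (fun p => p.1 ⬝ᵥ p.2)
  have hM : ∀ s, M s = ∑ x ∈ E, S (s • x) := by
    intro s
    simp [M, S, sum_product, smul_dotProduct]
  have hM0 : ‖M 0‖ ^ 2 = #E ^ 4 := by
    simp only [M, zero_mul, AddChar.map_zero_eq_one, sum_const, card_product, nsmul_eq_mul,
      Nat.cast_mul, mul_one, Complex.norm_mul, RCLike.norm_natCast]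
    ring
  calc (Fintype.card F : ℝ) * #{p ∈ (E ×ˢ E) ×ˢ (E ×ˢ E) | p.1.1 ⬝ᵥ p.1.2 = p.2.1 ⬝ᵥ p.2.2}
      = ‖M 0‖ ^ 2 + ∑ s ∈ univ.erase (0 : F), ‖M s‖ ^ 2 := by
        rw [add_sum_erase univ (fun s => ‖M s‖ ^ 2) (mem_univ 0)]
        exact hEnergy.symm
    _ ≤ #E ^ 4 + #E * ∑ s ∈ univ.erase (0 : F), ∑ x ∈ E, ‖S (s • x)‖ ^ 2 := by
        rw [hM0, mul_sum]
        gcongr with s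
        rw [hM]
        exact norm_sum_sq_le_card_mul_sum_norm_sq _ _
    _ ≤ #E ^ 4 + #E * (B * ∑ z, ‖S z‖ ^ 2) := by
        gcongr
        exact sum_erase_zero_sum_smul_le h0 hB hline (f := fun z => ‖S z‖ ^ 2)
          fun z => sq_nonneg _
    _ = #E ^ 4 + B * Fintype.card (ι → F) * #E ^ 2 := by
        rw [hParseval]
        ring

end Energy

lemma mul_sq_div_add_sq_le {q e K N B : ℝ} (hq : 0 ≤ q) (hK : 0 ≤ K) (hB : 0 ≤ B)
    (hCS : e ^ 4 ≤ K * N) (hEnergy : q * N ≤ e ^ 4 + B * e ^ 2) :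
    q * e ^ 2 / (B + e ^ 2) ≤ K := by
  rcases eq_or_ne e 0 with rfl | he
  · simpa using hK
  have he2 : 0 < e ^ 2 := by positivity
  rw [div_le_iff₀ (by positivity)]
  refine le_of_mul_le_mul_right ?_ he2
  calc q * e ^ 2 * e ^ 2 = q * e ^ 4 := by ring
    _ ≤ q * (K * N) := mul_le_mul_of_nonneg_left hCS hq
    _ = K * (q * N) := by ring
    _ ≤ K * (e ^ 4 + B * e ^ 2) := mul_le_mul_of_nonneg_left hEnergy hK
    _ = K * (B + e ^ 2) * e ^ 2 := by ring

theorem stmt_11_general {F : Type*} [Field F] [Fintype F] (d : ℕ)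
    (Cgeom α : ℝ) (hCgeom : 0 < Cgeom)
    (E : Finset (Fin d → F)) (h0 : (0 : Fin d → F) ∉ E)
    (hline : ∀ y : Fin d → F, y ≠ 0 →
      (Set.ncard ((E : Set (Fin d → F)) ∩ {x | ∃ t : F, x = t • y}) : ℝ) ≤
        Cgeom * (Fintype.card F : ℝ) ^ (α / d)) :
    (Set.ncard {t : F | ∃ x ∈ E, ∃ y ∈ E, t = ∑ i, x i * y i} : ℝ) ≥
      (Fintype.card F : ℝ) * (E.card : ℝ) ^ 2 /
        (Cgeom * (Fintype.card F : ℝ) ^ ((d : ℝ) + α / d) + (E.card : ℝ) ^ 2) := by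
  classical
  have hq : (0 : ℝ) < Fintype.card F := by exact_mod_cast Fintype.card_pos
  have hB : 0 ≤ Cgeom * (Fintype.card F : ℝ) ^ (α / d) := by positivity
  have hline' : ∀ y ≠ 0, (#{x ∈ E | ∃ t : F, x = t • y} : ℝ) ≤
      Cgeom * (Fintype.card F : ℝ) ^ (α / d) := fun y hy => by
    rw [← Set.ncard_coe_finset, coe_filter]
    exact hline y hy
  have hdots : {t : F | ∃ x ∈ E, ∃ y ∈ E, t = ∑ i, x i * y i} =
      ((E ×ˢ E).image fun p => p.1 ⬝ᵥ p.2 : Finset F) := by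
    ext t
    simp [dotProduct, and_assoc, eq_comm]
  have hCS := card_sq_le_card_image_mul_card_filter (E ×ˢ E) (fun p => p.1 ⬝ᵥ p.2)
  have hEnergy := card_mul_card_eq_dotProduct_le h0 hB hline'
  have hdenom : Cgeom * (Fintype.card F : ℝ) ^ ((d : ℝ) + α / d) =
      Cgeom * (Fintype.card F : ℝ) ^ (α / d) * Fintype.card (Fin d → F) := by
    rw [Real.rpow_add hq, Real.rpow_natCast]
    simp only [Fintype.card_pi, prod_const, card_univ, Fintype.card_fin, Nat.cast_pow]
    ring
  rw [hdots, Set.ncard_coe_finset, hdenom, ge_iff_le]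
  refine mul_sq_div_add_sq_le hq.le (Nat.cast_nonneg _) (by positivity) ?_ hEnergy
  rw [card_product, ← sq, ← pow_mul] at hCS
  exact_mod_cast hCS

/-- If `0 ∉ E ⊆ F_q^d` and every line through the origin meets `E` in at most
`C_geom · q^(α/d)` points, then
`|{x·y : x,y ∈ E}| ≥ q · |E|² / (C_geom · q^(d+α/d) + |E|²)`. -/
theorem stmt_11 {F : Type*} [Field F] [Fintype F] (d : ℕ) (hd : 0 < d)
    (Cgeom α : ℝ) (hCgeom : 0 < Cgeom) (hα0 : 0 ≤ α) (hαd : α ≤ d)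
    (E : Finset (Fin d → F)) (h0 : (0 : Fin d → F) ∉ E)
    (hline : ∀ y : Fin d → F, y ≠ 0 →
      (Set.ncard ((E : Set (Fin d → F)) ∩ {x | ∃ t : F, x = t • y}) : ℝ) ≤
        Cgeom * (Fintype.card F : ℝ) ^ (α / d)) :
    (Set.ncard {t : F | ∃ x ∈ E, ∃ y ∈ E, t = ∑ i, x i * y i} : ℝ) ≥
      (Fintype.card F : ℝ) * (E.card : ℝ) ^ 2 /
        (Cgeom * (Fintype.card F : ℝ) ^ ((d : ℝ) + α / d) + (E.card : ℝ) ^ 2) :=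
  stmt_11_general d Cgeom α hCgeom E h0 hline
end

section
/- Let q be a prime power, F_q the finite field with q elements, and d a positive integer. Let E, F ⊆ F_q^d and for t ∈ F_q define ν(t) = |{(x,y) ∈ E × F : x·y = t}|. Then for every t ∈ F_q with t ≠ 0, |ν(t) - |E|·|F|/q| ≤ √(|E|·|F|) · q^((d-1)/2). In particular, if |E|·|F| > q^(d+1), then every nonzero t ∈ F_q can be written as t = x·y with x ∈ E, y ∈ F. -/
/-!
Fix a nontrivial additive character `ψ` of `𝔽_q`. Orthogonality gives
`q ν(t) - |E||F| = ∑_{x ∈ E} g(x)` with `g(x) = ∑_{y ∈ F} ∑_{s ≠ 0} ψ(s (x·y - t))`.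
Cauchy–Schwarz bounds the square of this by `|E| ∑_{x ∈ 𝔽_q^d} |g(x)|²`, and Plancherel turns the
full sum into `q^d` times a sum over the collisions `s y = s' y'` weighted by `ψ((s' - s) t)`.
Writing the collisions as `(y', s') = (a y, s / a)` and summing over `s` first, each `(y, a)` with
`a y ∈ F` contributes `q - 1` if `a = 1` and `-1` otherwise, so the weighted count is at most
`q |F|` and `(q ν(t) - |E||F|)² ≤ |E||F| q^(d+1)`.
-/

open Finset

namespace AddChar

lemma map_finset_sum {A M α : Type*} [AddCommMonoid A] [CommMonoid M] (ψ : AddChar A M)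
    (s : Finset α) (f : α → A) :
    ψ (∑ i ∈ s, f i) = ∏ i ∈ s, ψ (f i) := by
  induction s using Finset.cons_induction with
  | empty => simp
  | cons a s ha ih => rw [sum_cons, prod_cons, map_add_eq_mul, ih]

variable {K : Type*} [Field K] [Fintype K] [DecidableEq K] {ψ : AddChar K ℂ}

lemma sum_erase_zero_mulShift (hψ : ψ.IsPrimitive) (b : K) :
    ∑ s ∈ univ.erase 0, ψ (s * b) = (if b = 0 then (Fintype.card K : ℂ) else 0) - 1 := by
  rw [sum_erase_eq_sub (mem_univ _), sum_mulShift b hψ, zero_mul, map_zero_eq_one, Nat.cast_ite,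
    Nat.cast_zero]

variable {ι : Type*} [Fintype ι] [DecidableEq ι]

lemma sum_dotProduct (hψ : ψ.IsPrimitive) (v : ι → K) :
    ∑ x : ι → K, ψ (x ⬝ᵥ v) = if v = 0 then (Fintype.card K : ℂ) ^ Fintype.card ι else 0 := by
  simp_rw [dotProduct, map_finset_sum]
  rw [← Fintype.prod_sum fun i (s : K) => ψ (s * v i)]
  simp_rw [sum_mulShift _ hψ, Nat.cast_ite, Nat.cast_zero]
  split_ifs with hv
  · simp [hv]
  · obtain ⟨i, hi⟩ := Function.ne_iff.mp hv
    exact prod_eq_zero (mem_univ i) (if_neg hi)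

lemma sum_norm_sq_sum_mul_dotProduct (hψ : ψ.IsPrimitive) {α : Type*} (P : Finset α)
    (c : α → ℂ) (w : α → ι → K) :
    ((∑ x : ι → K, ‖∑ p ∈ P, c p * ψ (x ⬝ᵥ w p)‖ ^ 2 : ℝ) : ℂ) =
      (Fintype.card K : ℂ) ^ Fintype.card ι *
        ∑ p ∈ P, ∑ p' ∈ P, if w p = w p' then c p * starRingEnd ℂ (c p') else 0 := by
  have expand (x : ι → K) : (‖∑ p ∈ P, c p * ψ (x ⬝ᵥ w p)‖ : ℂ) ^ 2 =
      ∑ p ∈ P, ∑ p' ∈ P, c p * starRingEnd ℂ (c p') * ψ (x ⬝ᵥ (w p - w p')) := by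
    rw [← Complex.mul_conj', map_sum, sum_mul_sum]
    refine sum_congr rfl fun p _ => sum_congr rfl fun p' _ => ?_
    rw [map_mul, ← map_neg_eq_conj, dotProduct_sub, sub_eq_add_neg, map_add_eq_mul]
    ring
  push_cast
  simp_rw [expand]
  rw [sum_comm, mul_sum]
  refine sum_congr rfl fun p _ => ?_
  rw [sum_comm, mul_sum]
  refine sum_congr rfl fun p' _ => ?_
  rw [← mul_sum, sum_dotProduct hψ]
  simp only [sub_eq_zero]
  split_ifs <;> ring

end AddChar

open AddChar

section DotCount

variable {K : Type*} [Field K] [Fintype K] [DecidableEq K] {ι : Type*} [Fintype ι]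

/-- `ν(t)`. -/
def dotCount (E F : Finset (ι → K)) (t : K) : ℕ := #{p ∈ E ×ˢ F | p.1 ⬝ᵥ p.2 = t}

/-- The function `g` above; it equals `q · #{y ∈ F | x ⬝ᵥ y = t} - #F`. -/
def dotError (ψ : AddChar K ℂ) (F : Finset (ι → K)) (t : K) (x : ι → K) : ℂ :=
  ∑ p ∈ F ×ˢ univ.erase 0, ψ (-(p.2 * t)) * ψ (x ⬝ᵥ p.2 • p.1)

variable {ψ : AddChar K ℂ}

lemma mul_dotCount_sub_eq_sum_dotError (hψ : ψ.IsPrimitive) (E F : Finset (ι → K)) (t : K) :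
    (Fintype.card K : ℂ) * dotCount E F t - #E * #F = ∑ x ∈ E, dotError ψ F t x := by
  have pointwise (x y : ι → K) :
      (Fintype.card K : ℂ) * (if x ⬝ᵥ y = t then 1 else 0) - 1 =
        ∑ s ∈ univ.erase 0, ψ (-(s * t)) * ψ (x ⬝ᵥ s • y) := by
    have factor (s : K) : ψ (-(s * t)) * ψ (x ⬝ᵥ s • y) = ψ (s * (x ⬝ᵥ y - t)) := by
      rw [← map_add_eq_mul, dotProduct_smul, smul_eq_mul]
      ring_nf
    rw [sum_congr rfl fun s _ => factor s, sum_erase_zero_mulShift hψ]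
    simp only [sub_eq_zero, mul_ite, mul_one, mul_zero]
  simp_rw [dotError, sum_product, ← pointwise, sum_sub_distrib, ← mul_sum, sum_const, dotCount,
    card_filter, sum_product]
  push_cast
  ring

lemma sum_collisions (hψ : ψ.IsPrimitive) (F : Finset (ι → K)) {t : K} (ht : t ≠ 0) :
    ∑ p ∈ F ×ˢ univ.erase 0, ∑ p' ∈ F ×ˢ univ.erase 0,
        (if p.2 • p.1 = p'.2 • p'.1 then ψ (-(p.2 * t)) * starRingEnd ℂ (ψ (-(p'.2 * t))) else 0) =
      (Fintype.card K : ℂ) * #F - ∑ a ∈ univ.erase (0 : K), (#{y ∈ F | a • y ∈ F} : ℂ) := by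
  have inner (y : ι → K) {s : K} (hs : s ≠ 0) :
      ∑ p' ∈ F ×ˢ univ.erase 0,
        (if s • y = p'.2 • p'.1 then ψ (-(s * t)) * starRingEnd ℂ (ψ (-(p'.2 * t))) else 0) =
      ∑ a ∈ univ.erase 0, if a • y ∈ F then ψ (s * ((a⁻¹ - 1) * t)) else 0 := by
    rw [sum_product, sum_comm]
    have solve (s' : K) (hs' : s' ≠ 0) (y' : ι → K) : s • y = s' • y' ↔ y' = s'⁻¹ • s • y := by
      rw [eq_inv_smul_iff₀ hs', eq_comm]
    calc _ = ∑ s' ∈ univ.erase 0,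
          if s'⁻¹ • s • y ∈ F then ψ (-(s * t)) * starRingEnd ℂ (ψ (-(s' * t))) else 0 := by
          refine sum_congr rfl fun s' hs' => ?_
          simp_rw [solve s' (ne_of_mem_erase hs')]
          exact sum_ite_eq' F _ _
      _ = _ := by
          refine sum_nbij' (fun a => s * a⁻¹) (fun a => s * a⁻¹) ?_ ?_ ?_ ?_ fun s' hs' => ?_
          iterate 2 · intro a ha; simpa [hs] using ne_of_mem_erase ha
          iterate 2 · intro a _; field_simp
          have hs' : s' ≠ 0 := ne_of_mem_erase hs'
          rw [← map_neg_eq_conj, ← map_add_eq_mul, smul_smul]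
          congr 2
          · field_simp
          · field_simp
            ring
  have one_mem : (1 : K) ∈ univ.erase 0 := mem_erase.mpr ⟨one_ne_zero, mem_univ 1⟩
  calc _ = ∑ y ∈ F, ∑ s ∈ univ.erase 0, ∑ a ∈ univ.erase 0,
        if a • y ∈ F then ψ (s * ((a⁻¹ - 1) * t)) else 0 := by
        rw [sum_product]
        exact sum_congr rfl fun y _ => sum_congr rfl fun s hs => inner y (ne_of_mem_erase hs)
    _ = ∑ y ∈ F, ∑ a ∈ univ.erase (0 : K),
        if a • y ∈ F then (if a = 1 then (Fintype.card K : ℂ) else 0) - 1 else 0 := by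
        refine sum_congr rfl fun y _ => ?_
        rw [sum_comm]
        refine sum_congr rfl fun a _ => ?_
        have hb : (a⁻¹ - 1) * t = 0 ↔ a = 1 := by
          simp [ht, sub_eq_zero, inv_eq_one]
        rw [sum_ite_irrel, sum_const_zero, sum_erase_zero_mulShift hψ]
        simp only [hb]
    _ = _ := by
        rw [sum_comm]
        simp_rw [← sum_filter, sum_const, nsmul_eq_mul, mul_sub, mul_ite, mul_zero, mul_one,
          sum_sub_distrib, sum_ite_eq', if_pos one_mem, one_smul,
          filter_true_of_mem fun _ h => h]
        ring

variable [DecidableEq ι]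

lemma sum_norm_sq_dotError_le (hψ : ψ.IsPrimitive) (F : Finset (ι → K)) {t : K} (ht : t ≠ 0) :
    ∑ x : ι → K, ‖dotError ψ F t x‖ ^ 2 ≤ (Fintype.card K : ℝ) ^ (Fintype.card ι + 1) * #F := by
  have energy := sum_norm_sq_sum_mul_dotProduct hψ (F ×ˢ univ.erase 0)
    (fun p => ψ (-(p.2 * t))) (fun p => p.2 • p.1)
  rw [sum_collisions hψ F ht] at energy
  have energy_real : ∑ x : ι → K, ‖dotError ψ F t x‖ ^ 2 = (Fintype.card K : ℝ) ^ Fintype.card ι *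
      (Fintype.card K * #F - ∑ a ∈ univ.erase (0 : K), (#{y ∈ F | a • y ∈ F} : ℝ)) := by
    exact_mod_cast energy
  rw [energy_real, pow_succ, mul_assoc]
  gcongr
  exact sub_le_self _ (by positivity)

theorem sq_mul_dotCount_sub_le (E F : Finset (ι → K)) {t : K} (ht : t ≠ 0) :
    ((Fintype.card K : ℝ) * dotCount E F t - #E * #F) ^ 2 ≤
      #E * #F * (Fintype.card K : ℝ) ^ (Fintype.card ι + 1) := by
  obtain ⟨ψ, hψ1⟩ := AddChar.exists_apply_ne_zero.mpr (one_ne_zero (α := K))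
  have hψ : ψ.IsPrimitive := .of_ne_one fun h => hψ1 (h ▸ rfl)
  have expansion := mul_dotCount_sub_eq_sum_dotError hψ E F t
  calc ((Fintype.card K : ℝ) * dotCount E F t - #E * #F) ^ 2
      = ‖∑ x ∈ E, dotError ψ F t x‖ ^ 2 := by
        rw [← expansion, ← sq_abs]
        norm_cast
    _ ≤ (∑ x ∈ E, ‖dotError ψ F t x‖) ^ 2 := by gcongr; exact norm_sum_le _ _
    _ ≤ #E * ∑ x ∈ E, ‖dotError ψ F t x‖ ^ 2 := sq_sum_le_card_mul_sum_sq
    _ ≤ #E * ∑ x : ι → K, ‖dotError ψ F t x‖ ^ 2 := by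
        gcongr
        exact subset_univ E
    _ ≤ #E * ((Fintype.card K : ℝ) ^ (Fintype.card ι + 1) * #F) := by
        gcongr
        exact sum_norm_sq_dotError_le hψ F ht
    _ = _ := by ring

theorem dotCount_pos (E F : Finset (ι → K)) {t : K} (ht : t ≠ 0)
    (hEF : (Fintype.card K : ℝ) ^ (Fintype.card ι + 1) < #E * #F) : 0 < dotCount E F t := by
  by_contra! h
  have bound := sq_mul_dotCount_sub_le E F ht
  rw [Nat.le_zero.mp h, Nat.cast_zero, mul_zero, zero_sub, neg_sq, sq] at bound
  have hEF_pos : (0 : ℝ) < #E * #F := lt_of_le_of_lt (by positivity) hEF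
  exact (le_of_mul_le_mul_left bound hEF_pos).not_gt hEF

end DotCount

lemma abs_sub_div_le_sqrt_mul_rpow {ν m q : ℝ} (n : ℕ) (hq : 0 < q) (hm : 0 ≤ m)
    (h : (q * ν - m) ^ 2 ≤ m * q ^ (n + 1)) : |ν - m / q| ≤ √m * q ^ (((n : ℝ) - 1) / 2) := by
  refine abs_le_of_sq_le_sq ?_ (by positivity)
  rw [mul_pow, Real.sq_sqrt hm, ← Real.rpow_mul_natCast hq.le,
    show ((n : ℝ) - 1) / 2 * (2 : ℕ) = n - 1 by push_cast; ring, Real.rpow_sub_one hq.ne',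
    Real.rpow_natCast]
  calc (ν - m / q) ^ 2 = (q * ν - m) ^ 2 / q ^ 2 := by field_simp
    _ ≤ m * q ^ (n + 1) / q ^ 2 := by gcongr
    _ = m * (q ^ n / q) := by field_simp; ring

open Finset in
theorem stmt_15_general {K : Type*} [Field K] [Fintype K] [DecidableEq K] (d : ℕ)
    (E F : Finset (Fin d → K)) :
    (∀ t : K, t ≠ 0 →
      |(((E ×ˢ F).filter (fun p => ∑ i, p.1 i * p.2 i = t)).card : ℝ) -
          (E.card : ℝ) * (F.card : ℝ) / (Fintype.card K : ℝ)| ≤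
        Real.sqrt ((E.card : ℝ) * (F.card : ℝ)) *
          (Fintype.card K : ℝ) ^ (((d : ℝ) - 1) / 2)) ∧
    ((E.card : ℝ) * (F.card : ℝ) > (Fintype.card K : ℝ) ^ (d + 1) →
      ∀ t : K, t ≠ 0 → ∃ x ∈ E, ∃ y ∈ F, t = ∑ i, x i * y i) := by
  constructor
  · intro t ht
    have bound := sq_mul_dotCount_sub_le E F ht
    rw [Fintype.card_fin] at bound
    exact abs_sub_div_le_sqrt_mul_rpow d (by exact_mod_cast Fintype.card_pos) (by positivity) bound
  · intro hEF t ht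
    have pos := dotCount_pos E F ht (by rwa [Fintype.card_fin])
    obtain ⟨⟨x, y⟩, hxy⟩ := card_pos.mp pos
    rw [mem_filter, mem_product] at hxy
    exact ⟨x, hxy.1.1, y, hxy.1.2, hxy.2.symm⟩

open Finset in
/-- For `E, F ⊆ F_q^d` and `ν(t) = |{(x,y) ∈ E × F : x·y = t}|`, one has
`|ν(t) - |E||F|/q| ≤ √(|E||F|) · q^((d-1)/2)` for every `t ≠ 0`; in particular, if
`|E||F| > q^(d+1)` then every nonzero `t` is a dot product `x·y` with `x ∈ E`, `y ∈ F`. -/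
theorem stmt_15 {K : Type*} [Field K] [Fintype K] [DecidableEq K] (d : ℕ) (hd : 0 < d)
    (E F : Finset (Fin d → K)) :
    (∀ t : K, t ≠ 0 →
      |(((E ×ˢ F).filter (fun p => ∑ i, p.1 i * p.2 i = t)).card : ℝ) -
          (E.card : ℝ) * (F.card : ℝ) / (Fintype.card K : ℝ)| ≤
        Real.sqrt ((E.card : ℝ) * (F.card : ℝ)) *
          (Fintype.card K : ℝ) ^ (((d : ℝ) - 1) / 2)) ∧
    ((E.card : ℝ) * (F.card : ℝ) > (Fintype.card K : ℝ) ^ (d + 1) →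
      ∀ t : K, t ≠ 0 → ∃ x ∈ E, ∃ y ∈ F, t = ∑ i, x i * y i) :=
  stmt_15_general d E F
end
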